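/- arXiv:2102.03108 — 5 statements merged into one kernel-verified Lean document; each statement's English description precedes it below -/
import Mathlib

section
/- Let N be a natural number and let g : {0,1,…,N} → [0,1] be monotone increasing (g(k) ≤ g(k+1) for all k < N) and non-constant (g(N) > g(0)). Then the function P_g : [0,1] → ℝ defined by P_g(p) = Σ_{k=0}^{N} (N choose k) · p^k · (1-p)^{N-k} · g(k) is strictly increasing on [0,1]. -/
open Finset

lemma bin_hasDerivAt (N : ℕ) (g : ℕ → ℝ) (p : ℝ) :
    HasDerivAt (fun p : ℝ => ∑ k ∈ Finset.range (N + 1),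
        (N.choose k : ℝ) * p ^ k * (1 - p) ^ (N - k) * g k)
      (∑ j ∈ Finset.range N,
        (N : ℝ) * ((N-1).choose j : ℝ) * p ^ j * (1 - p) ^ (N - 1 - j) * (g (j+1) - g j)) p := by
  have h1 : ∀ k ∈ Finset.range (N+1), HasDerivAt
      (fun p : ℝ => (N.choose k : ℝ) * p ^ k * (1 - p) ^ (N - k) * g k)
      ((N.choose k : ℝ) * ((k:ℝ) * p^(k-1) * (1-p)^(N-k)
        - ((N-k : ℕ):ℝ) * p^k * (1-p)^(N-k-1)) * g k) p := by
    intro k _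
    have hp : HasDerivAt (fun p : ℝ => p ^ k) ((k:ℝ) * p^(k-1)) p := hasDerivAt_pow k p
    have hq : HasDerivAt (fun p : ℝ => (1 - p) ^ (N - k))
        (-(((N-k : ℕ):ℝ) * (1-p)^(N-k-1))) p := by
      have h := (hasDerivAt_pow (N-k) (1-p)).comp p
        ((hasDerivAt_const p (1:ℝ)).sub (hasDerivAt_id p))
      simpa [Function.comp_def] using h
    have := ((hp.const_mul ((N.choose k : ℝ))).mul hq).mul_const (g k)
    refine this.congr_deriv (Eq.symm ?_)
    ring
  have hsum := HasDerivAt.fun_sum h1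
  refine hsum.congr_deriv (Eq.symm ?_)
  have split : ∀ k, (N.choose k : ℝ) * ((k:ℝ) * p^(k-1) * (1-p)^(N-k)
        - ((N-k : ℕ):ℝ) * p^k * (1-p)^(N-k-1)) * g k
      = (N.choose k : ℝ) * (k:ℝ) * p^(k-1) * (1-p)^(N-k) * g k
        - (N.choose k : ℝ) * ((N-k : ℕ):ℝ) * p^k * (1-p)^(N-k-1) * g k := by
    intro k; ring
  simp only [split]
  rw [Finset.sum_sub_distrib]
  have hA : ∑ k ∈ Finset.range (N+1),
      (N.choose k : ℝ) * (k:ℝ) * p^(k-1) * (1-p)^(N-k) * g k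
      = ∑ j ∈ Finset.range N,
        (N : ℝ) * ((N-1).choose j : ℝ) * p ^ j * (1 - p) ^ (N - 1 - j) * g (j+1) := by
    rw [Finset.sum_range_succ']
    simp only [Nat.cast_zero, mul_zero, zero_mul, add_zero]
    refine Finset.sum_congr rfl fun j hj => ?_
    have hjN : j < N := Finset.mem_range.mp hj
    have hN1 : N - 1 + 1 = N := by omega
    have hid : N * ((N-1).choose j) = N.choose (j+1) * (j+1) := by
      have h := Nat.add_one_mul_choose_eq (N-1) j
      rw [hN1] at h
      exact h
    have hcast : (N:ℝ) * ((N-1).choose j : ℝ) = (N.choose (j+1) : ℝ) * ((j+1:ℕ):ℝ) := by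
      exact_mod_cast congrArg (Nat.cast : ℕ → ℝ) hid
    have hexp : N - (j+1) = N - 1 - j := by omega
    rw [hexp, Nat.add_sub_cancel, ← hcast]
  have hB : ∑ k ∈ Finset.range (N+1),
      (N.choose k : ℝ) * ((N-k : ℕ):ℝ) * p^k * (1-p)^(N-k-1) * g k
      = ∑ j ∈ Finset.range N,
        (N : ℝ) * ((N-1).choose j : ℝ) * p ^ j * (1 - p) ^ (N - 1 - j) * g j := by
    rw [Finset.sum_range_succ]
    simp only [Nat.sub_self, Nat.cast_zero, mul_zero, zero_mul, add_zero]
    refine Finset.sum_congr rfl fun j hj => ?_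
    have hjN : j < N := Finset.mem_range.mp hj
    have hN1 : N - 1 + 1 = N := by omega
    have hid : N.choose j * (N - j) = N * ((N-1).choose j) := by
      have h := Nat.choose_mul_succ_eq (N-1) j
      rw [hN1] at h
      rw [← h, Nat.mul_comm]
    have hcast : (N.choose j : ℝ) * ((N - j : ℕ):ℝ) = (N:ℝ) * ((N-1).choose j : ℝ) := by
      exact_mod_cast congrArg (Nat.cast : ℕ → ℝ) hid
    have hexp : N - j - 1 = N - 1 - j := by omega
    rw [hexp, hcast]
  rw [hA, hB, ← Finset.sum_sub_distrib]
  exact Finset.sum_congr rfl fun j _ => by ring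



/-- For `N : ℕ` and `g : {0,…,N} → [0,1]` monotone increasing and
non-constant, the binomial expectation `P_g(p) = Σ_k C(N,k) p^k (1-p)^(N-k) g(k)`
is strictly increasing on `[0,1]`. -/
theorem stmt_0 (N : ℕ) (g : ℕ → ℝ)
    (hg01 : ∀ k ≤ N, g k ∈ Set.Icc (0 : ℝ) 1)
    (hmono : ∀ k < N, g k ≤ g (k + 1))
    (hnc : g 0 < g N) :
    StrictMonoOn
      (fun p : ℝ => ∑ k ∈ Finset.range (N + 1),
        (N.choose k : ℝ) * p ^ k * (1 - p) ^ (N - k) * g k)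
      (Set.Icc (0 : ℝ) 1) := by
  apply strictMonoOn_of_deriv_pos (convex_Icc 0 1)
  · exact (continuous_finset_sum _ fun k _ => by fun_prop).continuousOn
  · intro x hx
    rw [interior_Icc] at hx
    rw [(bin_hasDerivAt N g x).deriv]
    -- exists j < N with g j < g (j+1)
    have hex : ∃ j, j < N ∧ g j < g (j+1) := by
      by_contra h
      push_neg at h
      have heq : ∀ k ≤ N, g k = g 0 := by
        intro k hk
        induction k with
        | zero => rfl
        | succ n ih =>
          have hn : n < N := by omega
          have heq2 := le_antisymm (h n hn) (hmono n hn)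
          rw [heq2, ih (by omega)]
      have := heq N le_rfl
      linarith
    obtain ⟨j, hjN, hj⟩ := hex
    apply Finset.sum_pos'
    · intro i hi
      have hiN : i < N := Finset.mem_range.mp hi
      have h1 : (0:ℝ) ≤ x ^ i := le_of_lt (pow_pos hx.1 i)
      have h2 : (0:ℝ) ≤ (1-x) ^ (N-1-i) := le_of_lt (pow_pos (by linarith [hx.2]) _)
      have h3 : (0:ℝ) ≤ g (i+1) - g i := by linarith [hmono i hiN]
      positivity
    · refine ⟨j, Finset.mem_range.mpr hjN, ?_⟩
      have h1 : (0:ℝ) < x ^ j := pow_pos hx.1 j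
      have h2 : (0:ℝ) < (1-x) ^ (N-1-j) := pow_pos (by linarith [hx.2]) _
      have h3 : (0:ℝ) < g (j+1) - g j := by linarith
      have hc : (0:ℝ) < ((N-1).choose j : ℝ) := by
        exact_mod_cast Nat.choose_pos (by omega)
      have hN : (0:ℝ) < (N:ℝ) := by exact_mod_cast Nat.pos_of_lt_add_left (by omega : j < N + j)
      positivity
end

section
/- Let M ∈ ℕ, let ε > 0 and δ > 0, and let s_0, s_1, …, s_{M+1} and t_0, t_1, …, t_{M+1} be real numbers in [0,1] with s_0 = t_0 = 0, s_{M+1} = t_{M+1} = 1, s_i − s_{i−1} ≥ ε for all 1 ≤ i ≤ M+1, and t_i − t_{i−1} ≥ δ for all 1 ≤ i ≤ M+1. Then there exist N ∈ ℕ and g : {0,…,N} → [0,1] such that the function f(p) = Σ_{k=0}^{N} (N choose k) · p^k · (1-p)^{N-k} · g(k) is strictly increasing on [0,1] and satisfies f(s_i) = t_i for every i ∈ {0,…,M+1}. -/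
open Finset
noncomputable def bp (N k : ℕ) (p : ℝ) : ℝ := (N.choose k : ℝ) * p ^ k * (1 - p) ^ (N - k)
lemma bp_eval (N k : ℕ) (p : ℝ) : (bernsteinPolynomial ℝ N k).eval p = bp N k p := by
  simp [bernsteinPolynomial, bp]
lemma bp_nonneg {N k : ℕ} {p : ℝ} (h0 : 0 ≤ p) (h1 : p ≤ 1) : 0 ≤ bp N k p := by
  have : (0:ℝ) ≤ 1 - p := by linarith
  unfold bp; positivity
lemma bp_sum (N : ℕ) (p : ℝ) : ∑ k ∈ range (N+1), bp N k p = 1 := by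
  have := congrArg (Polynomial.eval p) (bernsteinPolynomial.sum ℝ N)
  simpa [Polynomial.eval_finset_sum, bp_eval] using this
lemma bp_var (N : ℕ) (p : ℝ) :
    ∑ k ∈ range (N+1), ((N:ℝ)*p - k)^2 * bp N k p = N * p * (1-p) := by
  have := congrArg (Polynomial.eval p) (bernsteinPolynomial.variance ℝ N)
  simpa [Polynomial.eval_finset_sum, bp_eval, nsmul_eq_mul] using this

lemma cheb (N : ℕ) (p a : ℝ) (hp0 : 0 ≤ p) (hp1 : p ≤ 1) (ha : 0 < a)
    (S : Finset ℕ) (hS : S ⊆ range (N+1)) (h : ∀ k ∈ S, a ≤ |(N:ℝ)*p - k|) :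
    ∑ k ∈ S, bp N k p ≤ N / (4 * a^2) := by
  have step1 : ∑ k ∈ S, bp N k p ≤ ∑ k ∈ S, (((N:ℝ)*p - k)^2 / a^2) * bp N k p := by
    apply Finset.sum_le_sum
    intro k hk
    have hb := bp_nonneg (N := N) (k := k) hp0 hp1
    have h1 : (1:ℝ) ≤ ((N:ℝ)*p - k)^2 / a^2 := by
      rw [le_div_iff₀ (by positivity), one_mul]
      have := h k hk
      nlinarith [abs_nonneg ((N:ℝ)*p - k), sq_abs ((N:ℝ)*p - k)]
    nlinarith
  have step2 : ∑ k ∈ S, (((N:ℝ)*p - k)^2 / a^2) * bp N k p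
      ≤ ∑ k ∈ range (N+1), (((N:ℝ)*p - k)^2 / a^2) * bp N k p := by
    apply Finset.sum_le_sum_of_subset_of_nonneg hS
    intro k _ _
    have hb := bp_nonneg (N := N) (k := k) hp0 hp1
    positivity
  have step3 : ∑ k ∈ range (N+1), (((N:ℝ)*p - k)^2 / a^2) * bp N k p
      = (N * p * (1-p)) / a^2 := by
    rw [← bp_var N p, Finset.sum_div]
    apply Finset.sum_congr rfl
    intro k _; ring
  have step4 : (N * p * (1-p)) / a^2 ≤ N / (4 * a^2) := by
    rw [div_le_div_iff₀ (by positivity) (by positivity)]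
    nlinarith [mul_nonneg (mul_nonneg (Nat.cast_nonneg (α := ℝ) N) (sq_nonneg a)) (sq_nonneg (2*p-1))]
  linarith

noncomputable def FF (N q : ℕ) (p : ℝ) : ℝ := ∑ k ∈ Finset.Ico q (N+1), bp N k p

lemma FF_nonneg {N q : ℕ} {p : ℝ} (hp0 : 0 ≤ p) (hp1 : p ≤ 1) : 0 ≤ FF N q p :=
  Finset.sum_nonneg fun k _ => bp_nonneg hp0 hp1

lemma FF_le_one {N q : ℕ} {p : ℝ} (hp0 : 0 ≤ p) (hp1 : p ≤ 1) : FF N q p ≤ 1 := by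
  rw [← bp_sum N p]
  apply Finset.sum_le_sum_of_subset_of_nonneg
  · intro k hk; simp only [Finset.mem_Ico] at hk; simp [Finset.mem_range]; omega
  · intro k _ _; exact bp_nonneg hp0 hp1

lemma FF_compl {N q : ℕ} (hq : q ≤ N + 1) (p : ℝ) :
    FF N q p = 1 - ∑ k ∈ range q, bp N k p := by
  have h2 := Finset.sum_Ico_consecutive (fun k => bp N k p) (Nat.zero_le q) hq
  simp only [← Finset.range_eq_Ico] at h2
  rw [bp_sum] at h2
  rw [FF]
  linarith

lemma FF_at_zero {N q : ℕ} (hq : 1 ≤ q) : FF N q 0 = 0 := by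
  apply Finset.sum_eq_zero
  intro k hk
  simp only [Finset.mem_Ico] at hk
  have : k ≠ 0 := by omega
  simp [bp, zero_pow this]

lemma FF_at_one {N q : ℕ} (hq : q ≤ N) : FF N q 1 = 1 := by
  have : ∀ k ∈ Finset.Ico q (N+1), bp N k 1 = if k = N then 1 else 0 := by
    intro k hk
    simp only [Finset.mem_Ico] at hk
    by_cases h : k = N
    · subst h; simp [bp]
    · have : N - k ≠ 0 := by omega
      simp [bp, zero_pow this, h]
  rw [FF, Finset.sum_congr rfl this, Finset.sum_ite_eq' (Finset.Ico q (N+1)) N (fun _ => (1:ℝ))]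
  simp [Finset.mem_Ico, Nat.lt_succ_of_le, hq]

lemma FF_small {N q : ℕ} {p a : ℝ} (hp0 : 0 ≤ p) (hp1 : p ≤ 1) (ha : 0 < a)
    (h : (N:ℝ)*p + a ≤ q) : FF N q p ≤ N / (4*a^2) := by
  apply cheb N p a hp0 hp1 ha
  · intro k hk; simp only [Finset.mem_Ico, Finset.mem_range] at *; omega
  · intro k hk
    simp only [Finset.mem_Ico] at hk
    have : (q:ℝ) ≤ k := by exact_mod_cast hk.1
    rw [abs_sub_comm, abs_of_nonneg (by linarith)]
    linarith

lemma FF_large {N q : ℕ} {p a : ℝ} (hp0 : 0 ≤ p) (hp1 : p ≤ 1) (ha : 0 < a)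
    (hqN : q ≤ N) (h : (q:ℝ) ≤ (N:ℝ)*p - a + 1) : 1 - N / (4*a^2) ≤ FF N q p := by
  rw [FF_compl (by omega)]
  have : ∑ k ∈ range q, bp N k p ≤ N / (4*a^2) := by
    apply cheb N p a hp0 hp1 ha
    · intro k hk; simp only [Finset.mem_range] at *; omega
    · intro k hk
      simp only [Finset.mem_range] at hk
      have : (k:ℝ) ≤ (q:ℝ) - 1 := by
        have : (k:ℝ) + 1 ≤ q := by exact_mod_cast hk
        linarith
      rw [abs_of_nonneg (by linarith)]
      linarith
  linarith

lemma FF_strictMono {N q : ℕ} (hq1 : 1 ≤ q) (hqN : q ≤ N) :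
    StrictMonoOn (FF N q) (Set.Icc (0:ℝ) 1) := by
  set P : Polynomial ℝ := ∑ k ∈ Finset.Ico q (N+1), bernsteinPolynomial ℝ N k with hP
  have hFF : FF N q = fun p => P.eval p := by
    funext p; rw [FF, hP, Polynomial.eval_finset_sum]
    exact Finset.sum_congr rfl fun k _ => (bp_eval N k p).symm
  have hder : Polynomial.derivative P = (N : Polynomial ℝ) * bernsteinPolynomial ℝ (N-1) (q-1) := by
    rw [hP, map_sum, Finset.sum_Ico_eq_sum_range]
    have hterm : ∀ i ∈ Finset.range (N + 1 - q),
        Polynomial.derivative (bernsteinPolynomial ℝ N (q + i)) =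
        (N : Polynomial ℝ) * (bernsteinPolynomial ℝ (N-1) (q-1+i)
          - bernsteinPolynomial ℝ (N-1) (q-1+(i+1))) := by
      intro i _
      have hqi : q + i = (q - 1 + i) + 1 := by omega
      rw [hqi, bernsteinPolynomial.derivative_succ, add_assoc]
    rw [Finset.sum_congr rfl hterm, ← Finset.mul_sum,
      Finset.sum_range_sub' (fun i => bernsteinPolynomial ℝ (N-1) (q-1+i))]
    have h1 : q - 1 + (N + 1 - q) = N := by omega
    have h2 : bernsteinPolynomial ℝ (N-1) N = 0 :=
      bernsteinPolynomial.eq_zero_of_lt ℝ (by omega)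
    rw [h1, h2, sub_zero, add_zero]
  rw [hFF]
  apply strictMonoOn_of_deriv_pos (convex_Icc 0 1)
  · exact (Polynomial.continuous P).continuousOn
  · intro x hx
    rw [interior_Icc, Set.mem_Ioo] at hx
    rw [Polynomial.deriv, hder, Polynomial.eval_mul, Polynomial.eval_natCast, bp_eval]
    have hc : (0:ℝ) < ((N-1).choose (q-1) : ℝ) := by
      exact_mod_cast Nat.choose_pos (show q - 1 ≤ N - 1 by omega)
    have hN : (0:ℝ) < (N:ℝ) := by exact_mod_cast (by omega : 0 < N)
    exact mul_pos hN (mul_pos (mul_pos hc (pow_pos hx.1 _)) (pow_pos (by linarith [hx.2]) _))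

set_option maxHeartbeats 1000000 in
/-- Given points `0 = s₀ < s₁ < … < s_{M+1} = 1` with gaps at least `ε`
and `0 = t₀ < t₁ < … < t_{M+1} = 1` with gaps at least `δ`, there exist `N` and
`g : {0,…,N} → [0,1]` such that `f(p) = Σ_k C(N,k) p^k (1-p)^(N-k) g(k)` is strictly
increasing on `[0,1]` and `f(sᵢ) = tᵢ` for all `i ∈ {0,…,M+1}`. -/
theorem stmt_1 (M : ℕ) (ε δ : ℝ) (hε : 0 < ε) (hδ : 0 < δ)
    (s t : ℕ → ℝ)
    (hs01 : ∀ i ≤ M + 1, s i ∈ Set.Icc (0 : ℝ) 1)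
    (ht01 : ∀ i ≤ M + 1, t i ∈ Set.Icc (0 : ℝ) 1)
    (hs0 : s 0 = 0) (hsM : s (M + 1) = 1)
    (ht0 : t 0 = 0) (htM : t (M + 1) = 1)
    (hsgap : ∀ i, 1 ≤ i → i ≤ M + 1 → ε ≤ s i - s (i - 1))
    (htgap : ∀ i, 1 ≤ i → i ≤ M + 1 → δ ≤ t i - t (i - 1)) :
    ∃ (N : ℕ) (g : ℕ → ℝ),
      (∀ k ≤ N, g k ∈ Set.Icc (0 : ℝ) 1) ∧
      StrictMonoOn
        (fun p : ℝ => ∑ k ∈ Finset.range (N + 1),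
          (N.choose k : ℝ) * p ^ k * (1 - p) ^ (N - k) * g k)
        (Set.Icc (0 : ℝ) 1) ∧
      ∀ i ≤ M + 1,
        (∑ k ∈ Finset.range (N + 1),
          (N.choose k : ℝ) * (s i) ^ k * (1 - s i) ^ (N - k) * g k) = t i := by
  -- simple gap consequences
  have hsgap' : ∀ i ≤ M, ε ≤ s (i+1) - s i := by
    intro i hi
    have := hsgap (i+1) (by omega) (by omega)
    simpa using this
  have htgap' : ∀ i ≤ M, δ ≤ t (i+1) - t i := by
    intro i hi
    have := htgap (i+1) (by omega) (by omega)
    simpa using this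
  have hε1 : ε ≤ 1 := by
    have h := hsgap' 0 (by omega)
    have h1 := (hs01 1 (by omega)).2
    have h0 := (hs01 0 (by omega)).1
    linarith
  have hδ1 : δ ≤ 1 := by
    have h := htgap' 0 (by omega)
    have h1 := (ht01 1 (by omega)).2
    have h0 := (ht01 0 (by omega)).1
    linarith
  -- monotonicity of s
  have hsmono : ∀ a b : ℕ, a ≤ b → b ≤ M + 1 → s a ≤ s b := by
    intro a b hab hb
    induction b with
    | zero =>
      have : a = 0 := by omega
      simp [this]
    | succ n ih =>
      rcases Nat.lt_or_ge a (n+1) with h | h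
      · have h1 : s a ≤ s n := ih (by omega) (by omega)
        have h2 := hsgap' n (by omega)
        linarith
      · have : a = n + 1 := by omega
        simp [this]
  -- choose N
  obtain ⟨N, hNbig⟩ := exists_nat_ge (2/ε + 8*((M:ℝ)+2)/(δ*ε^2))
  have hpos1 : 0 < 2/ε := by positivity
  have hpos2 : 0 < 8*((M:ℝ)+2)/(δ*ε^2) := by positivity
  have hN2ε : 2 ≤ (N:ℝ)*ε := by
    have h2ε : 2/ε ≤ (N:ℝ) := by linarith
    rw [div_le_iff₀ hε] at h2ε
    linarith
  have hN0 : 0 < N := by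
    by_contra h
    push_neg at h
    interval_cases N
    simp at hN2ε; linarith
  have hNR : (0:ℝ) < N := by exact_mod_cast hN0
  set η : ℝ := 1/((N:ℝ)*ε^2) with hη_def
  have hη0 : 0 < η := by positivity
  set κ : ℝ := ((M:ℝ)+2)*η with hκ_def
  have hκ0 : 0 < κ := by positivity
  have hκδ : κ ≤ δ/8 := by
    have h8 : 8*((M:ℝ)+2)/(δ*ε^2) ≤ (N:ℝ) := by linarith
    rw [div_le_iff₀ (by positivity)] at h8
    rw [hκ_def, hη_def, mul_one_div, div_le_div_iff₀ (by positivity) (by norm_num)]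
    linarith
  have hκ1 : κ < 1 := by linarith
  -- midpoints and thresholds
  set m : ℕ → ℝ := fun i => (s i + s (i+1))/2 with hm_def
  set q : ℕ → ℕ := fun i => ⌈(N:ℝ) * m i⌉₊ with hq_def
  have hm_lb : ∀ i ≤ M, s i + ε/2 ≤ m i := by
    intro i hi; have := hsgap' i hi; simp only [hm_def]; linarith
  have hm_ub : ∀ i ≤ M, m i ≤ s (i+1) - ε/2 := by
    intro i hi; have := hsgap' i hi; simp only [hm_def]; linarith
  have hm_pos : ∀ i ≤ M, ε/2 ≤ m i := by
    intro i hi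
    have := hm_lb i hi
    have := (hs01 i (by omega)).1
    linarith
  have hm_lt : ∀ i ≤ M, m i ≤ 1 - ε/2 := by
    intro i hi
    have := hm_ub i hi
    have := (hs01 (i+1) (by omega)).2
    linarith
  have hq_ge : ∀ i, (N:ℝ) * m i ≤ q i := fun i => Nat.le_ceil _
  have hq_lt : ∀ i ≤ M, (q i : ℝ) < (N:ℝ) * m i + 1 := by
    intro i hi
    apply Nat.ceil_lt_add_one
    have h := hm_pos i hi
    exact le_of_lt (mul_pos hNR (by linarith))
  have hq1 : ∀ i ≤ M, 1 ≤ q i := by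
    intro i hi
    have h1 : (0:ℝ) < (N:ℝ) * m i := by
      have h := hm_pos i hi
      exact mul_pos hNR (by linarith)
    simp only [hq_def]
    exact Nat.ceil_pos.mpr h1
  have hqN : ∀ i ≤ M, q i ≤ N := by
    intro i hi
    have h1 := hq_lt i hi
    have h2 := hm_lt i hi
    have : (q i : ℝ) < (N:ℝ) := by nlinarith
    exact_mod_cast this.le
  -- FF entry bounds
  have hFlo : ∀ i ≤ M, ∀ j ≤ M + 1, j ≤ i → FF N (q i) (s j) ≤ η := by
    intro i hi j hj hji
    have hsj := hs01 j hj
    have hsmall : FF N (q i) (s j) ≤ (N:ℝ) / (4*((N:ℝ)*ε/2)^2) := by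
      apply FF_small hsj.1 hsj.2 (half_pos (mul_pos hNR hε))
      have h1 : s j ≤ s i := hsmono j i hji (by omega)
      have h2 := hm_lb i hi
      have h3 := hq_ge i
      nlinarith
    have heq : (N:ℝ) / (4*((N:ℝ)*ε/2)^2) = η := by
      rw [hη_def]; field_simp; ring
    linarith
  have hFhi : ∀ i ≤ M, ∀ j ≤ M + 1, i + 1 ≤ j → 1 - η ≤ FF N (q i) (s j) := by
    intro i hi j hj hji
    have hsj := hs01 j hj
    have hlarge : 1 - (N:ℝ) / (4*((N:ℝ)*ε/2)^2) ≤ FF N (q i) (s j) := by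
      apply FF_large hsj.1 hsj.2 (half_pos (mul_pos hNR hε)) (hqN i hi)
      have h1 : s (i+1) ≤ s j := hsmono (i+1) j hji hj
      have h2 := hm_ub i hi
      have h3 := hq_lt i hi
      nlinarith
    have heq : (N:ℝ) / (4*((N:ℝ)*ε/2)^2) = η := by
      rw [hη_def]; field_simp; ring
    linarith
  -- linear system setup
  set B : Fin (M+1) → Fin (M+1) → ℝ :=
    fun j i => FF N (q i) (s ((j:ℕ)+1)) - FF N (q i) (s (j:ℕ)) with hB_def
  set d : Fin (M+1) → ℝ := fun j => t ((j:ℕ)+1) - t (j:ℕ) with hd_def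
  have hd_lb : ∀ j, δ ≤ d j := fun j => htgap' (j:ℕ) (by omega)
  have hd_ub : ∀ j, d j ≤ 1 := by
    intro j
    have h1 := (ht01 ((j:ℕ)+1) (by omega)).2
    have h2 := (ht01 (j:ℕ) (by omega)).1
    simp only [hd_def]; linarith
  have hiM : ∀ i : Fin (M+1), (i:ℕ) ≤ M := fun i => by omega
  have row : ∀ j : Fin (M+1), ∑ i, |(if i = j then (1:ℝ) else 0) - B j i| ≤ κ := by
    intro j
    have hdiag : |(1:ℝ) - B j j| ≤ 2*η := by
      have h1 := hFhi (j:ℕ) (hiM j) ((j:ℕ)+1) (by omega) (by omega)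
      have h2 := hFlo (j:ℕ) (hiM j) (j:ℕ) (by omega) (by omega)
      have h3 := FF_le_one (N := N) (q := q (j:ℕ)) (hs01 ((j:ℕ)+1) (by omega)).1
        (hs01 ((j:ℕ)+1) (by omega)).2
      have h4 := FF_nonneg (N := N) (q := q (j:ℕ)) (hs01 (j:ℕ) (by omega)).1
        (hs01 (j:ℕ) (by omega)).2
      rw [abs_le]; constructor <;> simp only [hB_def] <;> [linarith; linarith]
    have hoff : ∀ i : Fin (M+1), i ≠ j → |B j i| ≤ η := by
      intro i hij
      rcases Nat.lt_or_ge (i:ℕ) (j:ℕ) with h | h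
      · have h1 := hFhi (i:ℕ) (hiM i) (j:ℕ) (by omega) (by omega)
        have h2 := hFhi (i:ℕ) (hiM i) ((j:ℕ)+1) (by omega) (by omega)
        have h3 := FF_le_one (N := N) (q := q (i:ℕ)) (hs01 ((j:ℕ)+1) (by omega)).1
          (hs01 ((j:ℕ)+1) (by omega)).2
        have h4 := FF_le_one (N := N) (q := q (i:ℕ)) (hs01 (j:ℕ) (by omega)).1
          (hs01 (j:ℕ) (by omega)).2
        rw [abs_le]; constructor <;> simp only [hB_def] <;> [linarith; linarith]
      · have hne : (i:ℕ) ≠ (j:ℕ) := fun hc => hij (Fin.ext hc)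
        have h1 := hFlo (i:ℕ) (hiM i) (j:ℕ) (by omega) (by omega)
        have h2 := hFlo (i:ℕ) (hiM i) ((j:ℕ)+1) (by omega) (by omega)
        have h3 := FF_nonneg (N := N) (q := q (i:ℕ)) (hs01 ((j:ℕ)+1) (by omega)).1
          (hs01 ((j:ℕ)+1) (by omega)).2
        have h4 := FF_nonneg (N := N) (q := q (i:ℕ)) (hs01 (j:ℕ) (by omega)).1
          (hs01 (j:ℕ) (by omega)).2
        rw [abs_le]; constructor <;> simp only [hB_def] <;> [linarith; linarith]
    rw [← Finset.add_sum_erase Finset.univ _ (Finset.mem_univ j)]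
    have hjj : |(if j = j then (1:ℝ) else 0) - B j j| = |(1:ℝ) - B j j| := by simp
    have hsum_off : ∑ i ∈ Finset.univ.erase j, |(if i = j then (1:ℝ) else 0) - B j i| ≤ (M:ℝ) * η := by
      have hcard : (Finset.univ.erase j).card = M := by
        rw [Finset.card_erase_of_mem (Finset.mem_univ j)]
        simp
      calc ∑ i ∈ Finset.univ.erase j, |(if i = j then (1:ℝ) else 0) - B j i|
          ≤ ∑ _i ∈ Finset.univ.erase j, η := by
            apply Finset.sum_le_sum
            intro i hi
            have hij := Finset.ne_of_mem_erase hi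
            rw [if_neg hij, zero_sub, abs_neg]
            exact hoff i hij
        _ = (M:ℝ) * η := by rw [Finset.sum_const, hcard, nsmul_eq_mul]
    rw [hjj]
    have : κ = 2*η + (M:ℝ)*η := by rw [hκ_def]; ring
    linarith
  -- key algebraic identity
  have hkey : ∀ (x : Fin (M+1) → ℝ) (j : Fin (M+1)),
      x j - ∑ i, B j i * x i = ∑ i, ((if i = j then (1:ℝ) else 0) - B j i) * x i := by
    intro x j
    rw [Finset.sum_congr rfl (fun i _ => sub_mul ((if i = j then (1:ℝ) else 0)) (B j i) (x i)),
      Finset.sum_sub_distrib]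
    congr 1
    rw [Finset.sum_congr rfl (fun i _ => by
      rw [ite_mul, one_mul, zero_mul] :
        ∀ i ∈ Finset.univ, (if i = j then (1:ℝ) else 0) * x i = if i = j then x i else 0)]
    simp
  have hbound : ∀ (x : Fin (M+1) → ℝ) (D : ℝ), 0 ≤ D → (∀ i, |x i| ≤ D) →
      ∀ j : Fin (M+1), |∑ i, ((if i = j then (1:ℝ) else 0) - B j i) * x i| ≤ κ * D := by
    intro x D hD hx j
    calc |∑ i, ((if i = j then (1:ℝ) else 0) - B j i) * x i|
        ≤ ∑ i, |((if i = j then (1:ℝ) else 0) - B j i) * x i| :=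
          Finset.abs_sum_le_sum_abs _ _
      _ = ∑ i, |((if i = j then (1:ℝ) else 0) - B j i)| * |x i| := by
          simp only [abs_mul]
      _ ≤ ∑ i, |((if i = j then (1:ℝ) else 0) - B j i)| * D := by
          apply Finset.sum_le_sum
          intro i _
          exact mul_le_mul_of_nonneg_left (hx i) (abs_nonneg _)
      _ = (∑ i, |((if i = j then (1:ℝ) else 0) - B j i)|) * D := by
          rw [Finset.sum_mul]
      _ ≤ κ * D := mul_le_mul_of_nonneg_right (row j) hD
  have hcombo : ∀ (x : Fin (M+1) → ℝ) (D : ℝ), 0 ≤ D → (∀ i, |x i| ≤ D) →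
      ∀ j : Fin (M+1), |x j - ∑ i, B j i * x i| ≤ κ * D := by
    intro x D hD hx j
    rw [hkey]
    exact hbound x D hD hx j
  -- the contraction
  set T : (Fin (M+1) → ℝ) → (Fin (M+1) → ℝ) :=
    fun c j => c j + d j - ∑ i, B j i * c i with hT_def
  set K : NNReal := ⟨κ, hκ0.le⟩ with hK_def
  have hKκ : (K:ℝ) = κ := rfl
  have hT : ContractingWith K T := by
    constructor
    · exact_mod_cast hκ1
    · apply LipschitzWith.of_dist_le_mul
      intro c c'
      have hDnn : (0:ℝ) ≤ dist c c' := dist_nonneg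
      rw [dist_pi_le_iff (by positivity)]
      intro j
      rw [Real.dist_eq]
      have h4 := hcombo (fun i => c i - c' i) (dist c c') hDnn
        (fun i => by
          rw [← Real.dist_eq]
          exact dist_le_pi_dist c c' i) j
      have hTc : T c j - T c' j = (c j - c' j) - ∑ i, B j i * (c i - c' i) := by
        simp only [hT_def, mul_sub, Finset.sum_sub_distrib]
        ring
      rw [hTc]
      exact h4
  set c : Fin (M+1) → ℝ := ContractingWith.fixedPoint T hT with hc_def
  have hfix : T c = c := hT.fixedPoint_isFixedPt
  have heq : ∀ j, ∑ i, B j i * c i = d j := by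
    intro j
    have := congrFun hfix j
    simp only [hT_def] at this
    linarith
  -- distance bound
  have hκhalf : κ ≤ 1/2 := by linarith
  have hdTd : dist d (T d) ≤ κ := by
    rw [dist_pi_le_iff hκ0.le]
    intro j
    rw [Real.dist_eq]
    have h1 : d j - T d j = -(d j - ∑ i, B j i * d i) := by
      simp only [hT_def]; ring
    rw [h1, abs_neg]
    have := hcombo d 1 zero_le_one (fun i => by
      rw [abs_of_nonneg (by linarith [hd_lb i])]
      exact hd_ub i) j
    simpa using this
  have hdc : ∀ i, |d i - c i| ≤ 2*κ := by
    have h1 : dist d c ≤ dist d (T d) / (1 - (K:ℝ)) := hT.dist_fixedPoint_le d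
    have h2 : dist d (T d) / (1 - (K:ℝ)) ≤ κ / (1-κ) := by
      rw [hKκ]
      gcongr
    have h3 : κ/(1-κ) ≤ 2*κ := by
      rw [div_le_iff₀ (by linarith)]
      nlinarith
    intro i
    have h4 : dist (d i) (c i) ≤ dist d c := dist_le_pi_dist d c i
    rw [Real.dist_eq] at h4
    linarith
  have hc_lb : ∀ i, δ/2 ≤ c i := by
    intro i
    have h1 := hdc i
    have h2 := hd_lb i
    rw [abs_le] at h1
    have : 2*κ ≤ δ/4 := by linarith
    linarith [h1.2]
  have hc_pos : ∀ i, 0 < c i := fun i => lt_of_lt_of_le (by linarith) (hc_lb i)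
  -- sum of c equals 1
  have htel : ∀ (u : ℕ → ℝ), ∑ j : Fin (M+1), (u ((j:ℕ)+1) - u (j:ℕ)) = u (M+1) - u 0 := by
    intro u
    rw [Fin.sum_univ_eq_sum_range (fun j => u (j+1) - u j) (M+1)]
    exact Finset.sum_range_sub u (M+1)
  have hsum1 : ∑ i, c i = 1 := by
    have hL : ∑ j, ∑ i, B j i * c i = ∑ j, d j :=
      Finset.sum_congr rfl (fun j _ => heq j)
    rw [Finset.sum_comm] at hL
    have hR : ∑ j, d j = 1 := by
      rw [hd_def, htel t, htM, ht0]
      ring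
    have hBcol : ∀ i : Fin (M+1), ∑ j, B j i = 1 := by
      intro i
      rw [hB_def]
      have := htel (fun j => FF N (q (i:ℕ)) (s j))
      rw [this, hsM, hs0, FF_at_one (hqN (i:ℕ) (hiM i)), FF_at_zero (hq1 (i:ℕ) (hiM i))]
      ring
    have : ∑ i : Fin (M+1), c i = ∑ i, ∑ j, B j i * c i := by
      apply Finset.sum_congr rfl
      intro i _
      rw [← Finset.sum_mul, hBcol i, one_mul]
    rw [this, hL, hR]
  -- define g
  set g : ℕ → ℝ := fun k => ∑ i : Fin (M+1), if q (i:ℕ) ≤ k then c i else 0 with hg_def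
  have hg01 : ∀ k, g k ∈ Set.Icc (0:ℝ) 1 := by
    intro k
    constructor
    · apply Finset.sum_nonneg
      intro i _
      split
      · exact (hc_pos i).le
      · exact le_refl 0
    · rw [← hsum1]
      apply Finset.sum_le_sum
      intro i _
      split
      · exact le_refl (c i)
      · exact (hc_pos i).le
  -- rewriting f
  have hfilter : ∀ i : Fin (M+1),
      Finset.filter (fun k => q (i:ℕ) ≤ k) (Finset.range (N+1)) = Finset.Ico (q (i:ℕ)) (N+1) := by
    intro i
    ext k
    simp only [Finset.mem_filter, Finset.mem_range, Finset.mem_Ico]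
    omega
  have hfF : ∀ p : ℝ, (∑ k ∈ Finset.range (N + 1),
      (N.choose k : ℝ) * p ^ k * (1 - p) ^ (N - k) * g k)
      = ∑ i : Fin (M+1), c i * FF N (q (i:ℕ)) p := by
    intro p
    have h1 : ∀ k ∈ Finset.range (N+1),
        (N.choose k : ℝ) * p ^ k * (1 - p) ^ (N - k) * g k
        = ∑ i : Fin (M+1), (if q (i:ℕ) ≤ k then bp N k p * c i else 0) := by
      intro k _
      rw [hg_def]
      show bp N k p * ∑ i : Fin (M+1), (if q (i:ℕ) ≤ k then c i else 0) = _
      rw [Finset.mul_sum]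
      apply Finset.sum_congr rfl
      intro i _
      rw [mul_ite, mul_zero]
    rw [Finset.sum_congr rfl h1, Finset.sum_comm]
    apply Finset.sum_congr rfl
    intro i _
    rw [← Finset.sum_filter, hfilter i, ← Finset.sum_mul, ← FF, mul_comm]
  -- interpolation
  have hinterp : ∀ j, j ≤ M+1 → ∑ i : Fin (M+1), c i * FF N (q (i:ℕ)) (s j) = t j := by
    intro j
    induction j with
    | zero =>
      intro _
      rw [hs0, ht0]
      apply Finset.sum_eq_zero
      intro i _
      rw [FF_at_zero (hq1 (i:ℕ) (hiM i)), mul_zero]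
    | succ n ih =>
      intro hn1
      have hn : n ≤ M := by omega
      have ihn := ih (by omega)
      have hBj := heq ⟨n, by omega⟩
      have hexp : ∑ i : Fin (M+1), c i * FF N (q (i:ℕ)) (s (n+1))
          = (∑ i : Fin (M+1), c i * FF N (q (i:ℕ)) (s n))
            + ∑ i, B ⟨n, by omega⟩ i * c i := by
        rw [← Finset.sum_add_distrib]
        apply Finset.sum_congr rfl
        intro i _
        simp only [hB_def]
        ring
      rw [hexp, ihn, hBj]
      simp only [hd_def]
      ring
  -- conclusion
  refine ⟨N, g, fun k _ => hg01 k, ?_, ?_⟩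
  · have hfun : (fun p : ℝ => ∑ k ∈ Finset.range (N + 1),
        (N.choose k : ℝ) * p ^ k * (1 - p) ^ (N - k) * g k)
        = fun p => ∑ i : Fin (M+1), c i * FF N (q (i:ℕ)) p := funext hfF
    rw [hfun]
    intro x hx y hy hxy
    apply Finset.sum_lt_sum_of_nonempty Finset.univ_nonempty
    intro i _
    exact mul_lt_mul_of_pos_left
      (FF_strictMono (hq1 (i:ℕ) (hiM i)) (hqN (i:ℕ) (hiM i)) hx hy hxy) (hc_pos i)
  · intro j hj
    rw [hfF (s j)]
    exact hinterp j hj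
end

section
/- Let T be a positive semidefinite Hermitian matrix on ℂ^d and let ψ ∈ ℂ^d be a unit vector with ⟨ψ, Tψ⟩ > 0. Let φ = (√T ψ) / ‖√T ψ‖, where √T denotes the positive semidefinite square root of T. Then ⟨φ, Tφ⟩ ≥ ⟨ψ, Tψ⟩. -/
open Matrix ComplexOrder

/-- The positive semidefinite square root of a positive semidefinite matrix
(restored from the December 2024 Mathlib, where it was `Matrix.PosSemidef.sqrt`). -/
noncomputable def Matrix.PosSemidef.sqrt {n 𝕜 : Type*} [Fintype n] [DecidableEq n] [RCLike 𝕜]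
    {A : Matrix n n 𝕜} (hA : A.PosSemidef) : Matrix n n 𝕜 :=
  hA.1.eigenvectorUnitary.1 * diagonal ((↑) ∘ (√·) ∘ hA.1.eigenvalues) *
  (star hA.1.eigenvectorUnitary : Matrix n n 𝕜)

/-! Write `S = √T` and `χ = Sψ`. Since `S` is Hermitian, `⟨ψ, Tψ⟩ = ‖χ‖²` and
`⟨χ, Tχ⟩ = ‖Sχ‖² = ‖Tψ‖²`, so `⟨φ, Tφ⟩ = ‖Tψ‖² / ⟨ψ, Tψ⟩`. Cauchy–Schwarz for the unit
vector `ψ` gives `⟨ψ, Tψ⟩² ≤ ‖Tψ‖²`, which is the claim. -/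

namespace Matrix

variable {n 𝕜 : Type*} [Fintype n] [RCLike 𝕜]

theorem re_star_dotProduct_sq_le (x y : n → 𝕜) :
    RCLike.re (star x ⬝ᵥ y) ^ 2 ≤ RCLike.re (star x ⬝ᵥ x) * RCLike.re (star y ⬝ᵥ y) := by
  have h := inner_mul_inner_self_le (𝕜 := 𝕜) (WithLp.toLp 2 x) (WithLp.toLp 2 y)
  simp only [EuclideanSpace.inner_toLp_toLp, dotProduct_comm _ (star _)] at h
  rw [star_dotProduct y, norm_star] at h
  calc RCLike.re (star x ⬝ᵥ y) ^ 2 = |RCLike.re (star x ⬝ᵥ y)| ^ 2 := (sq_abs _).symm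
    _ ≤ ‖star x ⬝ᵥ y‖ ^ 2 := by gcongr; exact RCLike.abs_re_le_norm _
    _ ≤ _ := by rwa [sq]

theorem IsHermitian.star_dotProduct_mul_self_mulVec {S : Matrix n n 𝕜} (hS : S.IsHermitian)
    (v : n → 𝕜) : star v ⬝ᵥ ((S * S) *ᵥ v) = star (S *ᵥ v) ⬝ᵥ (S *ᵥ v) := by
  rw [← mulVec_mulVec, dotProduct_mulVec, star_mulVec, hS.eq]

theorem star_smul_dotProduct_mulVec_smul (A : Matrix n n 𝕜) (r : ℝ) (v : n → 𝕜) :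
    star (r • v) ⬝ᵥ (A *ᵥ (r • v)) = r ^ 2 • (star v ⬝ᵥ (A *ᵥ v)) := by
  rw [star_smul, star_trivial, mulVec_smul, smul_dotProduct, dotProduct_smul, smul_smul, sq]

namespace PosSemidef

variable [DecidableEq n] {A : Matrix n n 𝕜}

theorem isHermitian_sqrt (hA : A.PosSemidef) : hA.sqrt.IsHermitian :=
  isHermitian_mul_mul_conjTranspose _ <| isHermitian_diagonal_iff.2 fun _ ↦ RCLike.conj_ofReal _

theorem sqrt_mul_self (hA : A.PosSemidef) : hA.sqrt * hA.sqrt = A := by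
  conv_rhs => rw [hA.1.spectral_theorem, Unitary.conjStarAlgAut_apply]
  simp only [sqrt, Matrix.mul_assoc]
  rw [← Matrix.mul_assoc (star _ : Matrix n n 𝕜), Unitary.coe_star_mul_self, Matrix.one_mul,
    ← Matrix.mul_assoc (diagonal _), diagonal_mul_diagonal]
  congr 3
  funext i
  simp [← RCLike.ofReal_mul, Real.mul_self_sqrt (hA.eigenvalues_nonneg i)]

end PosSemidef

end Matrix

/-- If `T` is positive semidefinite on `ℂ^d`, `ψ` a unit vector with
`⟨ψ, Tψ⟩ > 0`, and `φ = √T ψ / ‖√T ψ‖`, then `⟨φ, Tφ⟩ ≥ ⟨ψ, Tψ⟩`. -/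
theorem stmt_2 (d : ℕ) (T : Matrix (Fin d) (Fin d) ℂ) (hT : T.PosSemidef)
    (ψ : Fin d → ℂ) (hψ : star ψ ⬝ᵥ ψ = 1)
    (hpos : 0 < (star ψ ⬝ᵥ (T *ᵥ ψ)).re)
    (φ : Fin d → ℂ)
    (hφ : φ = ((Real.sqrt ((star (hT.sqrt *ᵥ ψ) ⬝ᵥ (hT.sqrt *ᵥ ψ)).re) : ℂ))⁻¹ •
      (hT.sqrt *ᵥ ψ)) :
    (star ψ ⬝ᵥ (T *ᵥ ψ)).re ≤ (star φ ⬝ᵥ (T *ᵥ φ)).re := by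
  have hcs := re_star_dotProduct_sq_le ψ (T *ᵥ ψ)
  simp only [hψ, RCLike.re_to_complex, Complex.one_re, one_mul] at hcs
  have hS := hT.isHermitian_sqrt
  have hSS := hT.sqrt_mul_self
  generalize hT.sqrt = S at hS hSS hφ
  subst hSS
  generalize hχ : S *ᵥ ψ = χ at hφ
  have hquad := hS.star_dotProduct_mul_self_mulVec
  rw [hquad ψ, hχ] at hpos
  rw [hquad ψ, ← mulVec_mulVec, hχ] at hcs
  have hφTφ :
      (star φ ⬝ᵥ ((S * S) *ᵥ φ)).re = (star χ ⬝ᵥ ((S * S) *ᵥ χ)).re / (star χ ⬝ᵥ χ).re := by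
    rw [hφ, ← Complex.ofReal_inv, Complex.coe_smul, star_smul_dotProduct_mulVec_smul,
      Complex.smul_re, smul_eq_mul, inv_pow, Real.sq_sqrt hpos.le, inv_mul_eq_div]
  rw [hφTφ, hquad ψ, hquad χ, hχ, le_div_iff₀ hpos, ← sq]
  exact hcs
end

section
/- Let N ∈ ℕ, let g : {0,…,N} → ℝ be monotone increasing (g(k) ≤ g(k+1) for all k < N), and let p ∈ [0,1]. Then Σ_{k=0}^{N} (N choose k) · p^k · (1-p)^{N-k} · (k − N·p) · g(k) ≥ (g(⌈Np⌉) − g(⌊Np⌋)) · Σ_{k=⌈Np⌉}^{N} (N choose k) · p^k · (1-p)^{N-k} · (k − N·p), and in particular the left-hand side is nonnegative. -/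
/-! The weights `w k = C(N,k) p^k (1-p)^(N-k) (k - Np)` sum to zero, since the binomial mean is
`Np`, and are `≤ 0` below `⌈Np⌉` and `≥ 0` from `⌈Np⌉` on. So a monotone `g` may be replaced by
`g ⌊Np⌋` on the lower part and by `g ⌈Np⌉` on the upper part, and the zero total mass turns
the result into `(g ⌈Np⌉ - g ⌊Np⌋) * ∑_{k ≥ ⌈Np⌉} w k`. -/

open Finset

lemma sum_choose_mul_pow_mul_pow_mul_sub_mean (N : ℕ) (p : ℝ) :
    ∑ k ∈ range (N + 1),
      (N.choose k : ℝ) * p ^ k * (1 - p) ^ (N - k) * ((k : ℝ) - N * p) = 0 := by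
  have hmass := congrArg (Polynomial.eval p) (bernsteinPolynomial.sum ℝ N)
  have hmean := congrArg (Polynomial.eval p) (bernsteinPolynomial.sum_smul ℝ N)
  simp only [bernsteinPolynomial, Polynomial.eval_finsetSum, Polynomial.eval_mul,
    Polynomial.eval_pow, Polynomial.eval_X, Polynomial.eval_sub, Polynomial.eval_one,
    Polynomial.eval_natCast, nsmul_eq_mul] at hmass hmean
  calc _ = ∑ k ∈ range (N + 1), (k : ℝ) * ((N.choose k : ℝ) * p ^ k * (1 - p) ^ (N - k))
        - N * p * ∑ k ∈ range (N + 1), (N.choose k : ℝ) * p ^ k * (1 - p) ^ (N - k) := by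
        rw [mul_sum, ← sum_sub_distrib]
        exact sum_congr rfl fun k _ => by ring
    _ = 0 := by rw [hmean, hmass]; ring

lemma le_sum_mul_of_sum_eq_zero_of_sign_change {w g : ℕ → ℝ} {n M : ℕ} {a b : ℝ}
    (hMn : M ≤ n) (hw : ∑ k ∈ range n, w k = 0) (hbelow : ∀ k < M, w k ≤ 0 ∧ g k ≤ a)
    (habove : ∀ k ∈ Ico M n, 0 ≤ w k ∧ b ≤ g k) :
    (b - a) * ∑ k ∈ Ico M n, w k ≤ ∑ k ∈ range n, w k * g k := by
  rw [← sum_range_add_sum_Ico _ hMn] at hw ⊢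
  have hlow : a * ∑ k ∈ range M, w k ≤ ∑ k ∈ range M, w k * g k := by
    rw [mul_sum]
    refine sum_le_sum fun k hk => ?_
    obtain ⟨hwk, hgk⟩ := hbelow k (mem_range.mp hk)
    nlinarith
  have hhigh : b * ∑ k ∈ Ico M n, w k ≤ ∑ k ∈ Ico M n, w k * g k := by
    rw [mul_sum]
    refine sum_le_sum fun k hk => ?_
    obtain ⟨hwk, hgk⟩ := habove k hk
    nlinarith
  rw [eq_neg_of_add_eq_zero_left hw] at hlow
  linarith

/-- For monotone increasing `g : {0,…,N} → ℝ` and `p ∈ [0,1]`,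
`Σ_{k=0}^{N} C(N,k) p^k (1-p)^(N-k) (k - Np) g(k)
  ≥ (g(⌈Np⌉) - g(⌊Np⌋)) · Σ_{k=⌈Np⌉}^{N} C(N,k) p^k (1-p)^(N-k) (k - Np)`,
and in particular the left-hand side is nonnegative. -/
theorem stmt_6 (N : ℕ) (g : ℕ → ℝ) (hmono : ∀ k < N, g k ≤ g (k + 1))
    (p : ℝ) (hp : p ∈ Set.Icc (0 : ℝ) 1) :
    ((g ⌈(N : ℝ) * p⌉₊ - g ⌊(N : ℝ) * p⌋₊) *
        ∑ k ∈ Finset.Icc ⌈(N : ℝ) * p⌉₊ N,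
          (N.choose k : ℝ) * p ^ k * (1 - p) ^ (N - k) * ((k : ℝ) - N * p)) ≤
      (∑ k ∈ Finset.range (N + 1),
        (N.choose k : ℝ) * p ^ k * (1 - p) ^ (N - k) * ((k : ℝ) - N * p) * g k) ∧
    0 ≤ ∑ k ∈ Finset.range (N + 1),
        (N.choose k : ℝ) * p ^ k * (1 - p) ^ (N - k) * ((k : ℝ) - N * p) * g k := by
  obtain ⟨hp0, hp1⟩ := hp
  set x := (N : ℝ) * p
  have hg : MonotoneOn g (Set.Iic N) :=
    monotoneOn_of_le_succ Set.ordConnected_Iic fun k _ _ hk => hmono k (Nat.succ_le_iff.mp hk)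
  have hceil : ⌈x⌉₊ ≤ N := Nat.ceil_le.mpr (mul_le_of_le_one_right N.cast_nonneg hp1)
  have hfloor : ⌊x⌋₊ ≤ N := (Nat.floor_le_ceil x).trans hceil
  have hmass (k : ℕ) : 0 ≤ (N.choose k : ℝ) * p ^ k * (1 - p) ^ (N - k) := by
    have : 0 ≤ 1 - p := sub_nonneg.mpr hp1
    positivity
  have key := le_sum_mul_of_sum_eq_zero_of_sign_change (g := g) (a := g ⌊x⌋₊) (b := g ⌈x⌉₊)
    (by omega : ⌈x⌉₊ ≤ N + 1) (sum_choose_mul_pow_mul_pow_mul_sub_mean N p)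
    (fun k hk => ⟨mul_nonpos_of_nonneg_of_nonpos (hmass k) (by linarith [Nat.lt_ceil.mp hk]),
      hg (Set.mem_Iic.mpr (by omega)) (Set.mem_Iic.mpr hfloor)
        (by have := Nat.ceil_le_floor_add_one x; omega)⟩)
    (fun k hk => by
      obtain ⟨hxk, hkN⟩ := mem_Ico.mp hk
      exact ⟨mul_nonneg (hmass k) (sub_nonneg.mpr (Nat.ceil_le.mp hxk)),
        hg (Set.mem_Iic.mpr hceil) (Set.mem_Iic.mpr (by omega)) hxk⟩)
  rw [Ico_add_one_right_eq_Icc] at key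
  refine ⟨key, le_trans (mul_nonneg ?_ ?_) key⟩
  · exact sub_nonneg.mpr
      (hg (Set.mem_Iic.mpr hfloor) (Set.mem_Iic.mpr hceil) (Nat.floor_le_ceil x))
  · exact sum_nonneg fun k hk =>
      mul_nonneg (hmass k) (sub_nonneg.mpr (Nat.ceil_le.mp (mem_Icc.mp hk).1))
end

section
/- Let N ∈ ℕ and let g : {0,…,N} → ℝ be monotone increasing with g(k₀+1) > g(k₀) for some k₀ ∈ {0,…,N−1}. Then for every p ∈ (0,1), Σ_{k=0}^{N} (N choose k) · p^k · (1-p)^{N-k} · (k − N·p) · g(k) > 0. -/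
open Finset

lemma key (M : ℕ) (g : ℕ → ℝ) (p : ℝ) :
    ∑ k ∈ Finset.range (M + 2),
        ((M+1).choose k : ℝ) * p ^ k * (1 - p) ^ (M + 1 - k) * ((k : ℝ) - (M+1 : ℕ) * p) * g k
      = ((M:ℝ)+1) * p * (1 - p) *
        ∑ j ∈ Finset.range (M + 1),
          (M.choose j : ℝ) * p ^ j * (1 - p) ^ (M - j) * (g (j+1) - g j) := by
  set q := 1 - p with hq
  have hsub : ∀ j ∈ Finset.range (M+1), M + 1 - (j+1) = M - j := by
    intro j hj; omega
  have hpascal : ∀ j, ((M+1).choose (j+1) : ℝ) = (M.choose j : ℝ) + (M.choose (j+1) : ℝ) := by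
    intro j; exact_mod_cast Nat.choose_succ_succ (M) (j)
  have hmul : ∀ j : ℕ, ((j:ℝ)+1) * ((M+1).choose (j+1) : ℝ) = ((M:ℝ)+1) * (M.choose j : ℝ) := by
    intro j
    have h : ((M+1) * M.choose j : ℕ) = ((M+1).choose (j+1) * (j+1) : ℕ) :=
      Nat.add_one_mul_choose_eq M j
    have h2 : (((M+1) * M.choose j : ℕ) : ℝ) = (((M+1).choose (j+1) * (j+1) : ℕ) : ℝ) := by
      exact_mod_cast h
    push_cast at h2
    linarith
  -- split LHS
  have split : ∑ k ∈ Finset.range (M + 2),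
        ((M+1).choose k : ℝ) * p ^ k * q ^ (M + 1 - k) * ((k : ℝ) - (M+1 : ℕ) * p) * g k
      = (∑ k ∈ Finset.range (M + 2), (k:ℝ) * ((M+1).choose k : ℝ) * p ^ k * q ^ (M + 1 - k) * g k)
        - ((M:ℝ)+1) * p * ∑ k ∈ Finset.range (M + 2), ((M+1).choose k : ℝ) * p ^ k * q ^ (M + 1 - k) * g k := by
    rw [Finset.mul_sum, ← Finset.sum_sub_distrib]
    apply Finset.sum_congr rfl
    intro k _
    push_cast
    ring
  have hS1 : (∑ k ∈ Finset.range (M + 2), (k:ℝ) * ((M+1).choose k : ℝ) * p ^ k * q ^ (M + 1 - k) * g k)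
      = ((M:ℝ)+1) * p * ∑ j ∈ Finset.range (M+1), (M.choose j : ℝ) * p ^ j * q ^ (M - j) * g (j+1) := by
    rw [Finset.sum_range_succ']
    simp only [Nat.cast_zero, zero_mul]
    rw [Finset.mul_sum]
    rw [add_zero]
    apply Finset.sum_congr rfl
    intro j hj
    rw [hsub j hj]
    push_cast
    rw [show ((j:ℝ)+1) * ((M+1).choose (j+1) : ℝ) * p ^ (j+1) * q ^ (M - j) * g (j+1)
        = (((j:ℝ)+1) * ((M+1).choose (j+1) : ℝ)) * (p ^ (j+1) * q ^ (M - j) * g (j+1)) by ring,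
      hmul j]
    ring
  have hS2 : (∑ k ∈ Finset.range (M + 2), ((M+1).choose k : ℝ) * p ^ k * q ^ (M + 1 - k) * g k)
      = (∑ j ∈ Finset.range (M+1), (M.choose j : ℝ) * p ^ j * q ^ (M + 1 - j) * g j)
        + ∑ j ∈ Finset.range (M+1), (M.choose j : ℝ) * p ^ (j+1) * q ^ (M - j) * g (j+1) := by
    rw [Finset.sum_range_succ']
    have e1 : ∀ j ∈ Finset.range (M+1),
        ((M+1).choose (j+1) : ℝ) * p ^ (j+1) * q ^ (M + 1 - (j+1)) * g (j+1)
        = (M.choose j : ℝ) * p ^ (j+1) * q ^ (M - j) * g (j+1)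
          + (M.choose (j+1) : ℝ) * p ^ (j+1) * q ^ (M + 1 - (j+1)) * g (j+1) := by
      intro j hj
      rw [hsub j hj, hpascal j]
      ring
    rw [Finset.sum_congr rfl e1, Finset.sum_add_distrib]
    have e2 : (∑ j ∈ Finset.range (M+1), (M.choose (j+1) : ℝ) * p ^ (j+1) * q ^ (M + 1 - (j+1)) * g (j+1))
        + ((M+1).choose 0 : ℝ) * p ^ 0 * q ^ (M + 1 - 0) * g 0
        = ∑ j ∈ Finset.range (M+1), (M.choose j : ℝ) * p ^ j * q ^ (M + 1 - j) * g j := by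
      have := (Finset.sum_range_succ' (fun k => (M.choose k : ℝ) * p ^ k * q ^ (M + 1 - k) * g k) (M+1)).symm
      rw [show ((M+1).choose 0 : ℝ) = (M.choose 0 : ℝ) by norm_num] 
      rw [this]
      rw [Finset.sum_range_succ]
      simp [Nat.choose_succ_self]
    linarith [e2]
  have e3 : ∀ j ∈ Finset.range (M+1), q ^ (M + 1 - j) = q * q ^ (M - j) := by
    intro j hj
    rw [Finset.mem_range] at hj
    rw [show M + 1 - j = (M - j) + 1 by omega, pow_succ]
    ring
  have final : (∑ j ∈ Finset.range (M+1), (M.choose j : ℝ) * p ^ j * q ^ (M - j) * g (j+1))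
      - ((∑ j ∈ Finset.range (M+1), (M.choose j : ℝ) * p ^ j * q ^ (M + 1 - j) * g j)
        + ∑ j ∈ Finset.range (M+1), (M.choose j : ℝ) * p ^ (j+1) * q ^ (M - j) * g (j+1))
      = q * ∑ j ∈ Finset.range (M + 1),
          (M.choose j : ℝ) * p ^ j * q ^ (M - j) * (g (j+1) - g j) := by
    rw [Finset.mul_sum, ← Finset.sum_add_distrib, ← Finset.sum_sub_distrib]
    apply Finset.sum_congr rfl
    intro j hj
    rw [e3 j hj, pow_succ]
    have hq' : p + q = 1 := by rw [hq]; ring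
    linear_combination (-((M.choose j : ℝ) * p ^ j * q ^ (M - j) * g (j+1))) * hq'
  rw [split, hS1, hS2, ← mul_sub, final]
  ring

/-- For monotone increasing `g : {0,…,N} → ℝ` with a strict increase
`g(k₀+1) > g(k₀)` at some `k₀ < N`, for every `p ∈ (0,1)`,
`Σ_{k=0}^{N} C(N,k) p^k (1-p)^(N-k) (k - Np) g(k) > 0`. -/
theorem stmt_7 (N : ℕ) (g : ℕ → ℝ) (hmono : ∀ k < N, g k ≤ g (k + 1))
    (k₀ : ℕ) (hk₀ : k₀ < N) (hstrict : g k₀ < g (k₀ + 1))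
    (p : ℝ) (hp : p ∈ Set.Ioo (0 : ℝ) 1) :
    0 < ∑ k ∈ Finset.range (N + 1),
        (N.choose k : ℝ) * p ^ k * (1 - p) ^ (N - k) * ((k : ℝ) - N * p) * g k := by
  obtain ⟨hp0, hp1⟩ := hp
  obtain ⟨M, rfl⟩ : ∃ M, N = M + 1 := ⟨N - 1, by omega⟩
  have hq : 0 < 1 - p := by linarith
  rw [show M + 1 + 1 = M + 2 from rfl]
  rw [key M g p]
  apply mul_pos
  · positivity
  · apply Finset.sum_pos'
    · intro j hj
      rw [Finset.mem_range] at hj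
      have h1 : (0:ℝ) ≤ g (j+1) - g j := by
        have := hmono j (by omega)
        linarith
      have h2 : (0:ℝ) < (M.choose j : ℝ) := by
        exact_mod_cast Nat.choose_pos (by omega)
      positivity
    · refine ⟨k₀, Finset.mem_range.mpr (by omega), ?_⟩
      have h2 : (0:ℝ) < (M.choose k₀ : ℝ) := by
        exact_mod_cast Nat.choose_pos (by omega)
      have h1 : (0:ℝ) < g (k₀+1) - g k₀ := by linarith
      positivity
end
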